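/- In the byte-granularity model with Algorithm 2, the recovery function is correct for the pattern [w₀, wb, sync_N, (w,sync_A)^n, crash, read] with n ≥ 1: the write-back persists w₀ to disk and appends a WRITEBACK marker, recovery replays exactly the n+1 subsequent WRITE records (the whole-page sync_N record and the n partial records) on the disk snapshot, and the recovered page equals the cache contents after the last sync, which includes w₀'s effect wherever not overwritten. -/
import Mathlib


/- Byte-granularity model: a page is a function from offsets to bytes; a
   record is a partial overwrite (off, len, data) within the page. -/

/-- A page of `n` bytes. -/
abbrev Page (n : ℕ) := Fin n → UInt8

/-- A partial-write record: bytes `[off, off+len)` get `data 0, …, data (len-1)`. -/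
structure Rec (n : ℕ) where
  off  : ℕ
  len  : ℕ
  data : ℕ → UInt8
  wf   : off + len ≤ n

/-- `r` covers offset `i`. -/
def covers {n : ℕ} (r : Rec n) (i : Fin n) : Prop :=
  r.off ≤ i.val ∧ i.val < r.off + r.len

/-- Apply one partial-write record to a page. -/
def applyRec {n : ℕ} (r : Rec n) (p : Page n) : Page n := fun i =>
  if r.off ≤ i.val ∧ i.val < r.off + r.len then r.data (i.val - r.off) else p i

/-- Apply a list of records in order (sequential overwrite application). -/
def applyRecs {n : ℕ} (rs : List (Rec n)) (p : Page n) : Page n :=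
  rs.foldl (fun p r => applyRec r p) p

/-- NVM log entries: a partial WRITE record, or a WRITEBACK marker. -/
inductive LogEntry (n : ℕ)
  | wr (r : Rec n)
  | wb

structure St (n : ℕ) where
  cache : Page n
  disk  : Page n
  log   : List (LogEntry n)

/-- A WRITE record covering the whole page with its current contents. -/
def fullRec {n : ℕ} (p : Page n) : Rec n :=
  ⟨0, n, fun k => if h : k < n then p ⟨k, h⟩ else 0, by omega⟩

/-- Events: a plain (cache-only) write, a write-back (disk := cache, append
    WRITEBACK marker), a whole-page sync `sync_N` (append a WRITE record
    covering the whole page), and an arbitrary-length sync write `sync_A`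
    (apply to cache and append the corresponding partial WRITE record). -/
inductive Ev (n : ℕ)
  | pwrite (r : Rec n)
  | writeback
  | syncN
  | syncA (r : Rec n)

def step {n : ℕ} (s : St n) : Ev n → St n
  | .pwrite r  => { s with cache := applyRec r s.cache }
  | .writeback => { s with disk := s.cache, log := s.log ++ [.wb] }
  | .syncN     => { s with log := s.log ++ [.wr (fullRec s.cache)] }
  | .syncA r   => { s with cache := applyRec r s.cache, log := s.log ++ [.wr r] }

def run {n : ℕ} (s : St n) (tr : List (Ev n)) : St n := tr.foldl step s

/-- The WRITE records appearing after the last WRITEBACK marker, in log order. -/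
def suffixRecords {n : ℕ} (log : List (LogEntry n)) : List (Rec n) :=
  log.foldl (fun acc e => match e with | .wb => [] | .wr r => acc ++ [r]) []

/-- Algorithm 2 recovery. -/
def recover {n : ℕ} (s : St n) : Page n := applyRecs (suffixRecords s.log) s.disk

lemma run_syncA_map {n : ℕ} (rs : List (Rec n)) (s : St n) :
    run s (rs.map Ev.syncA) =
      ⟨applyRecs rs s.cache, s.disk, s.log ++ rs.map LogEntry.wr⟩ := by
  induction rs generalizing s with
  | nil => simp [run, applyRecs]
  | cons r rs ih =>
    show run (step s (Ev.syncA r)) (rs.map Ev.syncA) = _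
    rw [ih]
    simp [step, applyRecs, List.append_assoc]

lemma foldl_suffix_wr {n : ℕ} (rs : List (Rec n)) (acc : List (Rec n)) :
    List.foldl (fun acc e => match e with | .wb => [] | .wr r => acc ++ [r])
      acc (rs.map LogEntry.wr) = acc ++ rs := by
  induction rs generalizing acc with
  | nil => simp
  | cons r rs ih => simp [ih]

lemma applyRec_fullRec {n : ℕ} (c d : Page n) : applyRec (fullRec c) d = c := by
  funext i
  simp [applyRec, fullRec, i.isLt]

lemma applyRecs_not_covered {n : ℕ} (rs : List (Rec n)) (p : Page n) (i : Fin n)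
    (h : ∀ r ∈ rs, ¬ covers r i) : applyRecs rs p i = p i := by
  induction rs generalizing p with
  | nil => rfl
  | cons r rs ih =>
    show applyRecs rs (applyRec r p) i = p i
    rw [ih _ (fun r hr => h r (by simp [hr]))]
    have hc := h r (by simp)
    rw [applyRec]; exact if_neg hc


/-- For traces of shape
    w₀; writeback; sync_N; (write; sync_A)ⁿ with n ≥ 1, recovery replays
    exactly the n+1 WRITE records after the WRITEBACK marker on the disk
    snapshot, the recovered page equals the final cache (the cache at the last
    sync), and w₀'s effect is present wherever not overwritten. -/
theorem algorithm2_case_w0_wb_syncN_syncA (n : ℕ) (p₀ : Page n)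
    (r₀ : Rec n) (rs : List (Rec n)) (hn : rs ≠ []) :
    let tr := [Ev.pwrite r₀, Ev.writeback, Ev.syncN] ++ rs.map Ev.syncA
    let s := run ⟨p₀, p₀, []⟩ tr
    (suffixRecords s.log).length = rs.length + 1 ∧
    recover s = s.cache ∧
    (∀ i : Fin n, covers r₀ i → (∀ r ∈ rs, ¬ covers r i) →
      recover s i = r₀.data (i.val - r₀.off)) := by
  intro tr s
  have hs : s = ⟨applyRecs rs (applyRec r₀ p₀), applyRec r₀ p₀,
      [LogEntry.wb, LogEntry.wr (fullRec (applyRec r₀ p₀))] ++ rs.map LogEntry.wr⟩ := by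
    show run (step (step (step ⟨p₀, p₀, []⟩ (Ev.pwrite r₀)) Ev.writeback) Ev.syncN)
        (rs.map Ev.syncA) = _
    rw [run_syncA_map]
    simp [step]
  have hsuf : suffixRecords s.log = fullRec (applyRec r₀ p₀) :: rs := by
    rw [hs]
    show List.foldl _ [] (LogEntry.wb ::
      (LogEntry.wr (fullRec (applyRec r₀ p₀)) :: rs.map LogEntry.wr)) = _
    simp only [List.foldl_cons]
    exact foldl_suffix_wr rs _
  have hrec : recover s = applyRecs rs (applyRec r₀ p₀) := by
    rw [recover, hsuf]
    show applyRecs rs (applyRec (fullRec (applyRec r₀ p₀)) s.disk) = _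
    rw [applyRec_fullRec]
  refine ⟨by rw [hsuf]; simp, hrec.trans (congrArg St.cache hs).symm, ?_⟩
  intro i hcov hnc
  rw [hrec, applyRecs_not_covered rs _ i hnc, applyRec]; exact if_pos hcov
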